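/- arXiv:math/0505628 — 2 statements merged into one kernel-verified Lean document; each statement's English description precedes it below -/
import Mathlib

section
/- Let f, g be nondegenerate real ternary quadratic forms generating a pencil in orbit II or IIa. If the pencil is in orbit II, then p₂ < 0 and Φ₃₀A₁ > 0. If the pencil is in orbit IIa, then p₂ = 0 or Φ₃₀A₁ < 0. -/
open Matrix Polynomial Set

noncomputable section

/-- Real ternary quadratic forms are represented by their symmetric 3×3 matrices. -/
abbrev RMat := Matrix (Fin 3) (Fin 3) ℝ
abbrev CMat := Matrix (Fin 3) (Fin 3) ℂ

/-- The matrix of the pencil `t f + g`, over the polynomial ring ℝ[t]. -/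
def pencilPolyMat (F G : RMat) : Matrix (Fin 3) (Fin 3) (Polynomial ℝ) :=
  Matrix.of fun i j => Polynomial.C (F i j) * Polynomial.X + Polynomial.C (G i j)

/-- The (de-homogenized) characteristic form `φ(t) = Disc(t f + g)`. -/
def phiP (F G : RMat) : Polynomial ℝ := (pencilPolyMat F G).det

/-- The coefficients of the characteristic form: `ph F G 3 = Φ₃₀`, `ph F G 2 = Φ₂₁`,
`ph F G 1 = Φ₁₂`, `ph F G 0 = Φ₀₃`. -/
def ph (F G : RMat) (k : ℕ) : ℝ := (phiP F G).coeff k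

/-- `ψ(t)`: the coefficient of `v` in `det (v·Id − M(tf+g)) = v³ − μ(t)v² + ψ(t)v − φ(t)`. -/
def psiP (F G : RMat) : Polynomial ℝ := ((pencilPolyMat F G).charpoly).coeff 1

/-- `P`: the remainder of the euclidean division of `Φ₃₀ · ψ · φ′` by `φ`. -/
def Prem (F G : RMat) : Polynomial ℝ :=
  (Polynomial.C (ph F G 3) * psiP F G * derivative (phiP F G)) % (phiP F G)

/-- The coefficients `p₂, p₁, p₀` of `P`. -/
def pc (F G : RMat) (k : ℕ) : ℝ := (Prem F G).coeff k

/-- The principal subresultant coefficient `A₁ = sr₁(φ, P)`. -/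
def A1 (F G : RMat) : ℝ :=
  Matrix.det !![ph F G 3, ph F G 2, ph F G 1;
                0, pc F G 2, pc F G 1;
                pc F G 2, pc F G 1, pc F G 0]

/-- Resultant of a cubic and a quadratic (Sylvester determinant). -/
def syl32 (a3 a2 a1 a0 b2 b1 b0 : ℝ) : ℝ :=
  Matrix.det !![a3,a2,a1,a0,0; 0,a3,a2,a1,a0; b2,b1,b0,0,0; 0,b2,b1,b0,0; 0,0,b2,b1,b0]

/-- Resultant of a quadratic and a cubic (Sylvester determinant). -/
def syl23 (b2 b1 b0 a3 a2 a1 a0 : ℝ) : ℝ :=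
  Matrix.det !![b2,b1,b0,0,0; 0,b2,b1,b0,0; 0,0,b2,b1,b0; a3,a2,a1,a0,0; 0,a3,a2,a1,a0]

/-- `Res(φ, φ′)`. -/
def resPhiDPhi (F G : RMat) : ℝ :=
  syl32 (ph F G 3) (ph F G 2) (ph F G 1) (ph F G 0)
    ((derivative (phiP F G)).coeff 2) ((derivative (phiP F G)).coeff 1)
    ((derivative (phiP F G)).coeff 0)

/-- `Res(ψ, φ)`. -/
def resPsiPhi (F G : RMat) : ℝ :=
  syl23 ((psiP F G).coeff 2) ((psiP F G).coeff 1) ((psiP F G).coeff 0)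
    (ph F G 3) (ph F G 2) (ph F G 1) (ph F G 0)

/-- `A₀ = −Res(φ, P) = sr₀(φ, P)`. -/
def A0 (F G : RMat) : ℝ :=
  - syl32 (ph F G 3) (ph F G 2) (ph F G 1) (ph F G 0) (pc F G 2) (pc F G 1) (pc F G 0)

/-- The discriminant of the characteristic form, `Disc(Φ) = Res(φ,φ′)/(27 Φ₃₀)`. -/
def discPhi (F G : RMat) : ℝ := resPhiDPhi F G / (27 * ph F G 3)

/-- Coefficients of the Hessian determinant `H = H₂₀ t² + H₁₁ t u + H₀₂ u²` of `Φ`. -/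
def H20 (F G : RMat) : ℝ := 4 * (3 * ph F G 3 * ph F G 1 - (ph F G 2)^2)
def H11 (F G : RMat) : ℝ := 4 * (9 * ph F G 3 * ph F G 0 - ph F G 2 * ph F G 1)
def H02 (F G : RMat) : ℝ := 4 * (3 * ph F G 2 * ph F G 0 - (ph F G 1)^2)

/-- The Hessian covariant `H` of `Φ` vanishes identically. -/
def HVanishes (F G : RMat) : Prop := H20 F G = 0 ∧ H11 F G = 0 ∧ H02 F G = 0

/-- `Ω(f,g)`: the middle coefficient of the tangential form of `t f + g`, so that
`adj(tF+G) = adj(F) t² + Ω t + adj(G)`. -/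
def OmegaM (F G : RMat) : RMat := (F + G).adjugate - F.adjugate - G.adjugate

/-- The coefficients, in the basis `X², Y², Z², YZ, XZ, XY` of quadratic forms on the dual
space, of the quadratic form with matrix `N`. -/
def rowOf (N : RMat) : Fin 6 → ℝ := ![N 0 0, N 1 1, N 2 2, 2 * N 1 2, 2 * N 0 2, 2 * N 0 1]

/-- Maximal minors `[ijk]` of the 3×6 matrix `M` of the coefficients of `f̃`, `Ω`, `g̃`;
the columns `1, 2, 3, 1̄, 2̄, 3̄` are indexed `0, 1, 2, 3, 4, 5`. -/
def minorM (F G : RMat) (i j k : Fin 6) : ℝ :=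
  Matrix.det !![rowOf F.adjugate i, rowOf F.adjugate j, rowOf F.adjugate k;
                rowOf (OmegaM F G) i, rowOf (OmegaM F G) j, rowOf (OmegaM F G) k;
                rowOf G.adjugate i, rowOf G.adjugate j, rowOf G.adjugate k]

/-- The ten coefficients (in `x³, y³, z³, xy², xz², x²y, yz², x²z, y²z, xyz`) of the
autopolar triangle covariant `G` of `(f,g)`. -/
def Gcovar (F G : RMat) : Fin 10 → ℝ :=
  ![- minorM F G 3 1 2,
    - minorM F G 0 4 2,
    - minorM F G 0 1 5,
    minorM F G 0 3 2 + 2 * minorM F G 5 4 2,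
    minorM F G 0 1 3 + 2 * minorM F G 4 1 5,
    minorM F G 4 1 2 + 2 * minorM F G 3 5 2,
    minorM F G 0 1 4 + 2 * minorM F G 0 3 5,
    minorM F G 5 1 2 + 2 * minorM F G 3 1 4,
    minorM F G 0 5 2 + 2 * minorM F G 0 4 3,
    minorM F G 0 1 2 + 4 * minorM F G 3 4 5]

/-- The autopolar triangle covariant `G` vanishes identically. -/
def GVanishes (F G : RMat) : Prop := ∀ k, Gcovar F G k = 0

/-- The antisymmetric invariant `𝒜 = Φ₃₀Φ₁₂³ − Φ₀₃Φ₂₁³`. -/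
def antisymInv (F G : RMat) : ℝ := ph F G 3 * (ph F G 1)^3 - ph F G 0 * (ph F G 2)^3

/-- Coefficients of `Q = Remainder(P·φ″, φ)`:
`q₂ = 3p₁Φ₃₀ − 2p₂Φ₂₁`, `q₁ = 3p₀Φ₃₀ + p₁Φ₂₁ − 3p₂Φ₁₂`, `q₀ = p₀Φ₂₁ − 3p₂Φ₀₃`. -/
def qc2 (F G : RMat) : ℝ := 3 * pc F G 1 * ph F G 3 - 2 * pc F G 2 * ph F G 2
def qc1 (F G : RMat) : ℝ :=
  3 * pc F G 0 * ph F G 3 + pc F G 1 * ph F G 2 - 3 * pc F G 2 * ph F G 1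
def qc0 (F G : RMat) : ℝ := pc F G 0 * ph F G 2 - 3 * pc F G 2 * ph F G 0

/-- The subresultant coefficient `B₁ = sr₁(φ, Q)`. -/
def B1 (F G : RMat) : ℝ :=
  Matrix.det !![ph F G 3, ph F G 2, ph F G 1;
                0, qc2 F G, qc1 F G;
                qc2 F G, qc1 F G, qc0 F G]

/-- `R = 27Φ₃₀²Φ₀₃ + 2Φ₂₁³ − 6Φ₃₀Φ₂₁Φ₁₂ = Res(φ″,φ)/(8Φ₃₀)`. -/
def Rq (F G : RMat) : ℝ :=
  27 * (ph F G 3)^2 * ph F G 0 + 2 * (ph F G 2)^3 - 6 * ph F G 3 * ph F G 2 * ph F G 1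

/-- Action of a linear change of coordinates on quadratic forms: `f ∘ A` has matrix `Aᵀ F A`. -/
def transform (A : RMat) (M : RMat) : RMat := Aᵀ * M * A

/-- The pencil spanned by `[F], [G]` is the image, under a projective linear transformation,
of the pencil spanned by `[F₀], [G₀]`. -/
def PencilEquivTo (F G F₀ G₀ : RMat) : Prop :=
  ∃ A : GL (Fin 3) ℝ,
    Submodule.span ℝ ({transform (↑A) F₀, transform (↑A) G₀} : Set RMat) =
    Submodule.span ℝ ({F, G} : Set RMat)

/- Levy's representatives of the nine `PGL(3,ℝ)`-orbits of non-degenerate pencils of conics: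
orbit I: (x²−y², x²−z²); Ia: (x²+y²+z², xz); Ib: (x²+y²−z², xz); II: (yz, x(y−z));
IIa: (y²+z², xz); III: (xz, y²); IIIa: (x²+y², z²); IV: (xz−y², xy); V: (xz−y², x²). -/
def mXZ : RMat := !![0,0,1/2;0,0,0;1/2,0,0]
def levyI_f : RMat := !![1,0,0;0,-1,0;0,0,0]
def levyI_g : RMat := !![1,0,0;0,0,0;0,0,-1]
def levyIa_f : RMat := 1
def levyIa_g : RMat := mXZ
def levyIb_f : RMat := !![1,0,0;0,1,0;0,0,-1]
def levyIb_g : RMat := mXZ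
def levyII_f : RMat := !![0,0,0;0,0,1/2;0,1/2,0]
def levyII_g : RMat := !![0,1/2,-1/2;1/2,0,0;-1/2,0,0]
def levyIIa_f : RMat := !![0,0,0;0,1,0;0,0,1]
def levyIIa_g : RMat := mXZ
def levyIII_f : RMat := mXZ
def levyIII_g : RMat := !![0,0,0;0,1,0;0,0,0]
def levyIIIa_f : RMat := !![1,0,0;0,1,0;0,0,0]
def levyIIIa_g : RMat := !![0,0,0;0,0,0;0,0,1]
def levyIV_f : RMat := !![0,0,1/2;0,-1,0;1/2,0,0]
def levyIV_g : RMat := !![0,1/2,0;1/2,0,0;0,0,0]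
def levyV_f : RMat := !![0,0,1/2;0,-1,0;1/2,0,0]
def levyV_g : RMat := !![1,0,0;0,0,0;0,0,0]

/-! Write `F = Aᵀ (a f + b g) A`, `G = Aᵀ (c f + e g) A` with `(f, g)` Levy's representative
and `Δ = a e - b c ≠ 0`. In both orbits `det (s f + t g) = κ₀ s t²`, so with `u = a t + c`,
`v = b t + e` we get `φ = κ u v²` (`κ = κ₀ det(A)²`) and `ψ = α u² + β u v + γ v²`, where `α`, `γ`
are the sums of the values of the rank-one forms `adj f`, `adj g` on the rows of `adj A`. Modulo
`u v²` the polynomial `Φ₃₀ ψ φ'` reduces to `κ² Δ² v (b² γ v + 2 a b α u)`, whence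
`p₂ = κ² Δ² b² (b² γ + 2 a² α)` and `Φ₃₀ A₁ = 2 κ⁶ a² b⁸ Δ⁶ α γ`. In orbit II both `adj f` and
`adj g` are negative semidefinite, so `α, γ < 0`; in orbit IIa `adj f` is positive and `adj g`
negative semidefinite, so `α γ < 0`. -/

section Ternary

variable {R : Type*} [CommRing R]

theorem Matrix.charpoly_fin_three (M : Matrix (Fin 3) (Fin 3) R) :
    M.charpoly = X ^ 3 - C (trace M) * X ^ 2 + C (trace (adjugate M)) * X - C M.det := by
  simp [charpoly, det_fin_three, adjugate_fin_three, trace_fin_three]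
  ring

theorem Matrix.charpoly_coeff_one_fin_three (M : Matrix (Fin 3) (Fin 3) R) :
    M.charpoly.coeff 1 = trace (adjugate M) := by
  simp [charpoly_fin_three, coeff_C]

theorem Matrix.det_smul_add_smul_fin_three (u v : R) (M N : Matrix (Fin 3) (Fin 3) R) :
    (u • M + v • N).det = u ^ 3 * M.det + u ^ 2 * v * trace (adjugate M * N) +
      u * v ^ 2 * trace (M * adjugate N) + v ^ 3 * N.det := by
  simp [det_fin_three, adjugate_fin_three, trace_fin_three, mul_apply, Fin.sum_univ_three, vecMul,
    dotProduct]
  ring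

theorem Matrix.adjugate_smul_add_smul_fin_three (u v : R) (M N : Matrix (Fin 3) (Fin 3) R) :
    adjugate (u • M + v • N) = u ^ 2 • adjugate M +
      (u * v) • (adjugate (M + N) - adjugate M - adjugate N) + v ^ 2 • adjugate N := by
  ext i j
  fin_cases i <;> fin_cases j <;> simp [adjugate_fin_three] <;> ring

end Ternary

section MapC

variable {n R : Type*} [Fintype n] [CommRing R]

theorem Matrix.det_map_C [DecidableEq n] (M : Matrix n n R) : (M.map C).det = C M.det :=
  (RingHom.map_det C M).symm

theorem Matrix.adjugate_map_C [DecidableEq n] (M : Matrix n n R) :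
    adjugate (M.map C) = (adjugate M).map C :=
  (RingHom.map_adjugate C M).symm

theorem Matrix.trace_map_C (M : Matrix n n R) : trace (M.map C) = C (trace M) :=
  (AddMonoidHom.map_trace C M).symm

theorem Matrix.trace_map_C_mul_smul_mul (B M : Matrix n n R) (s : R[X]) :
    trace (B.map C * (s • M.map C) * (B.map C)ᵀ) = C (trace (B * M * Bᵀ)) * s := by
  rw [Matrix.mul_smul, Matrix.smul_mul, trace_smul, ← transpose_map, ← Matrix.map_mul,
    ← Matrix.map_mul, trace_map_C, smul_eq_mul, mul_comm]

theorem Matrix.det_map_C_smul_add_smul_fin_three (M N : Matrix (Fin 3) (Fin 3) R) (u v : R[X]) :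
    (u • M.map C + v • N.map C).det = u ^ 3 * C M.det + u ^ 2 * v * C (trace (adjugate M * N)) +
      u * v ^ 2 * C (trace (M * adjugate N)) + v ^ 3 * C N.det := by
  rw [det_smul_add_smul_fin_three, adjugate_map_C, adjugate_map_C, ← Matrix.map_mul,
    ← Matrix.map_mul, det_map_C, det_map_C, trace_map_C, trace_map_C]

end MapC

theorem Matrix.trace_mul_vecMulVec_mul_transpose_pos {n : Type*} [Fintype n] [DecidableEq n]
    {B : Matrix n n ℝ} (hB : B.det ≠ 0) {w : n → ℝ} (hw : w ≠ 0) :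
    0 < trace (B * vecMulVec w w * Bᵀ) := by
  rw [mul_vecMulVec, vecMulVec_mul, vecMul_transpose, trace_vecMulVec]
  simpa using dotProduct_star_self_pos_iff.2 fun h ↦ hw (eq_zero_of_mulVec_eq_zero hB h)

theorem Submodule.exists_eq_combination_of_span_pair_eq {K M : Type*} [Field K] [AddCommGroup M]
    [Module K M] {x y F G : M} (hxy : LinearIndependent K ![x, y])
    (h : span K {x, y} = span K {F, G}) :
    ∃ a b c e : K, F = a • x + b • y ∧ G = c • x + e • y ∧ a * e - b * c ≠ 0 := by
  obtain ⟨a, b, hF⟩ := mem_span_pair.1 (h ▸ subset_span (by simp) : F ∈ span K {x, y})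
  obtain ⟨c, e, hG⟩ := mem_span_pair.1 (h ▸ subset_span (by simp) : G ∈ span K {x, y})
  obtain ⟨p, q, hx⟩ := mem_span_pair.1 (h.symm ▸ subset_span (by simp) : x ∈ span K {F, G})
  obtain ⟨r, s, hy⟩ := mem_span_pair.1 (h.symm ▸ subset_span (by simp) : y ∈ span K {F, G})
  rw [← hF, ← hG] at hx hy
  have h₁ := LinearIndependent.pair_iff.1 hxy (p * a + q * c - 1) (p * b + q * e)
    (by rw [← sub_eq_zero.2 hx]; module)
  have h₂ := LinearIndependent.pair_iff.1 hxy (r * a + s * c) (r * b + s * e - 1)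
    (by rw [← sub_eq_zero.2 hy]; module)
  -- `h₁, h₂` say that `!![p, q; r, s] * !![a, b; c, e] = 1`; take determinants.
  refine ⟨a, b, c, e, hF.symm, hG.symm, fun hΔ ↦ one_ne_zero (α := K) ?_⟩
  linear_combination (r * a + s * c) * h₁.2 - (r * b + s * e) * h₁.1 + (p * s - q * r) * hΔ
    - h₂.2

section Remainder

variable {K : Type*} [Field K] {κ a b c e α β γ : K}

theorem Polynomial.C_mul_linear_mul_linear_sq :
    C κ * (C a * X + C c) * (C b * X + C e) ^ 2 =
      C (κ * a * b ^ 2) * X ^ 3 + C (κ * (b ^ 2 * c + 2 * a * b * e)) * X ^ 2 +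
        C (κ * (2 * b * c * e + a * e ^ 2)) * X + C (κ * c * e ^ 2) := by
  simp only [map_mul, map_add, map_pow, map_ofNat]
  ring

theorem Polynomial.mod_C_mul_linear_mul_linear_sq (hlead : κ * a * b ^ 2 ≠ 0) :
    (C (κ * a * b ^ 2) *
        (C α * (C a * X + C c) ^ 2 + C β * ((C a * X + C c) * (C b * X + C e)) +
          C γ * (C b * X + C e) ^ 2) *
        derivative (C κ * (C a * X + C c) * (C b * X + C e) ^ 2)) %
      (C κ * (C a * X + C c) * (C b * X + C e) ^ 2) =
    C (κ ^ 2 * (a * e - b * c) ^ 2) * (C b * X + C e) *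
      (C (b ^ 2 * γ) * (C b * X + C e) + C (2 * a * b * α) * (C a * X + C c)) := by
  have hdeg : (C κ * (C a * X + C c) * (C b * X + C e) ^ 2).degree = 3 := by
    compute_degree!
    simpa using hlead
  rw [mod_eq_of_dvd_sub, (mod_eq_self_iff fun h ↦ by simp [h] at hdeg).2]
  · rw [hdeg]
    refine lt_of_le_of_lt (b := 2) ?_ (by norm_num)
    compute_degree
  -- `b u - a v = -(a e - b c)` makes the difference a multiple of `u v²`.
  · refine Dvd.intro (C κ * (C (a * b ^ 2 * (a * α + 2 * b * β)) * (C a * X + C c) +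
      C (a * b ^ 2 * (a * β + 2 * b * γ)) * (C b * X + C e) +
      C (b ^ 3 * γ) * (C a * (C b * X + C e) + C (a * e - b * c)) +
      C (2 * a ^ 2 * b * α) * (C b * (C a * X + C c) - C (a * e - b * c)))) ?_
    simp only [derivative_mul, derivative_C, derivative_X, derivative_sq, map_mul,
      map_sub, map_pow, map_add, map_ofNat]
    ring

end Remainder

section Pencil

variable (A F G : RMat)

theorem pencilPolyMat_eq : pencilPolyMat F G = (X : ℝ[X]) • F.map C + G.map C := by
  ext i j : 1
  simp [pencilPolyMat, X_mul_C]

theorem ph_three_eq_det : ph F G 3 = F.det := by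
  rw [ph, phiP, pencilPolyMat_eq]
  exact coeff_det_X_add_C_card F G

theorem psiP_eq_trace_adjugate : psiP F G = trace (adjugate (pencilPolyMat F G)) :=
  charpoly_coeff_one_fin_three _

theorem transform_smul_add_smul (f g : RMat) (s t : ℝ) :
    transform A (s • f + t • g) = s • transform A f + t • transform A g := by
  simp only [transform, Matrix.mul_add, Matrix.add_mul, Matrix.mul_smul, Matrix.smul_mul]

theorem pencilPolyMat_transform :
    pencilPolyMat (transform A F) (transform A G) = (A.map C)ᵀ * pencilPolyMat F G * A.map C := by
  simp only [pencilPolyMat_eq, transform, Matrix.map_mul, transpose_map, Matrix.mul_add,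
    Matrix.add_mul, Matrix.mul_smul, Matrix.smul_mul]

theorem phiP_transform : phiP (transform A F) (transform A G) = C (A.det ^ 2) * phiP F G := by
  rw [phiP, phiP, pencilPolyMat_transform, det_mul, det_mul, det_transpose, det_map_C, map_pow]
  ring

theorem psiP_transform : psiP (transform A F) (transform A G) =
    trace ((adjugate A).map C * adjugate (pencilPolyMat F G) * ((adjugate A).map C)ᵀ) := by
  rw [psiP_eq_trace_adjugate, pencilPolyMat_transform, adjugate_mul_distrib, adjugate_mul_distrib,
    ← adjugate_transpose, adjugate_map_C, Matrix.mul_assoc]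

end Pencil

section Combination

variable (A f g : RMat) (a b c e : ℝ)

theorem pencilPolyMat_smul_add_smul :
    pencilPolyMat (a • f + b • g) (c • f + e • g) =
      (C a * X + C c) • f.map C + (C b * X + C e) • g.map C := by
  ext i j : 1
  simp [pencilPolyMat]
  ring

theorem phiP_transform_smul_add_smul :
    phiP (transform A (a • f + b • g)) (transform A (c • f + e • g)) =
      C (A.det ^ 2) * ((C a * X + C c) • f.map C + (C b * X + C e) • g.map C).det := by
  rw [phiP_transform, phiP, pencilPolyMat_smul_add_smul]

theorem psiP_transform_smul_add_smul :
    psiP (transform A (a • f + b • g)) (transform A (c • f + e • g)) =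
      C (trace (adjugate A * adjugate f * (adjugate A)ᵀ)) * (C a * X + C c) ^ 2 +
      C (trace (adjugate A * OmegaM f g * (adjugate A)ᵀ)) * ((C a * X + C c) * (C b * X + C e)) +
      C (trace (adjugate A * adjugate g * (adjugate A)ᵀ)) * (C b * X + C e) ^ 2 := by
  rw [psiP_transform, pencilPolyMat_smul_add_smul, adjugate_smul_add_smul_fin_three,
    ← Matrix.map_add _ (map_add C), adjugate_map_C, adjugate_map_C, adjugate_map_C,
    ← Matrix.map_sub _ (map_sub C), ← Matrix.map_sub _ (map_sub C), ← OmegaM,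
    Matrix.mul_add, Matrix.mul_add, Matrix.add_mul, Matrix.add_mul, trace_add, trace_add,
    trace_map_C_mul_smul_mul, trace_map_C_mul_smul_mul, trace_map_C_mul_smul_mul]

end Combination

section FactoredPencil

variable {F G : RMat} {κ a b c e α β γ : ℝ}

theorem ph_eq_of_phiP_eq (hφ : phiP F G = C κ * (C a * X + C c) * (C b * X + C e) ^ 2) :
    ph F G 3 = κ * a * b ^ 2 ∧ ph F G 2 = κ * (b ^ 2 * c + 2 * a * b * e) ∧
      ph F G 1 = κ * (2 * b * c * e + a * e ^ 2) := by
  simp only [ph, hφ, C_mul_linear_mul_linear_sq, coeff_add, coeff_C_mul, coeff_X_pow, coeff_X,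
    coeff_C]
  norm_num

theorem pc_eq_of_phiP_eq_of_psiP_eq (hφ : phiP F G = C κ * (C a * X + C c) * (C b * X + C e) ^ 2)
    (hψ : psiP F G = C α * (C a * X + C c) ^ 2 + C β * ((C a * X + C c) * (C b * X + C e)) +
      C γ * (C b * X + C e) ^ 2)
    (hlead : κ * a * b ^ 2 ≠ 0) :
    pc F G 2 = κ ^ 2 * (a * e - b * c) ^ 2 * (b ^ 4 * γ + 2 * a ^ 2 * b ^ 2 * α) ∧
      pc F G 1 = κ ^ 2 * (a * e - b * c) ^ 2 *
        (2 * b ^ 3 * e * γ + 2 * a * b * (a * e + b * c) * α) ∧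
      pc F G 0 = κ ^ 2 * (a * e - b * c) ^ 2 * (b ^ 2 * e ^ 2 * γ + 2 * a * b * c * e * α) := by
  have hP : Prem F G =
      C (κ ^ 2 * (a * e - b * c) ^ 2 * (b ^ 4 * γ + 2 * a ^ 2 * b ^ 2 * α)) * X ^ 2 +
      C (κ ^ 2 * (a * e - b * c) ^ 2 * (2 * b ^ 3 * e * γ + 2 * a * b * (a * e + b * c) * α)) * X +
      C (κ ^ 2 * (a * e - b * c) ^ 2 * (b ^ 2 * e ^ 2 * γ + 2 * a * b * c * e * α)) := by
    rw [Prem, (ph_eq_of_phiP_eq hφ).1, hφ, hψ, mod_C_mul_linear_mul_linear_sq hlead]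
    simp only [map_mul, map_add, map_pow, map_ofNat]
    ring
  simp only [pc, hP, coeff_add, coeff_C_mul, coeff_X_pow, coeff_X, coeff_C]
  norm_num

theorem ph_three_mul_A1_eq_of_phiP_eq_of_psiP_eq
    (hφ : phiP F G = C κ * (C a * X + C c) * (C b * X + C e) ^ 2)
    (hψ : psiP F G = C α * (C a * X + C c) ^ 2 + C β * ((C a * X + C c) * (C b * X + C e)) +
      C γ * (C b * X + C e) ^ 2)
    (hlead : κ * a * b ^ 2 ≠ 0) :
    ph F G 3 * A1 F G = 2 * κ ^ 6 * a ^ 2 * b ^ 8 * (a * e - b * c) ^ 6 * (α * γ) := by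
  obtain ⟨h3, h2, h1⟩ := ph_eq_of_phiP_eq hφ
  obtain ⟨p2, p1, p0⟩ := pc_eq_of_phiP_eq_of_psiP_eq hφ hψ hlead
  rw [A1, det_fin_three]
  simp only [of_apply, cons_val', cons_val_zero, cons_val_fin_one, cons_val_one, cons_val,
    h3, h2, h1, p2, p1, p0]
  ring

end FactoredPencil

theorem transform_injective {A : RMat} (hA : IsUnit A) : Function.Injective (transform A) :=
  fun _ _ h ↦ ((isUnit_transpose A).2 hA).mul_right_inj.1 (hA.mul_left_inj.1 h)

theorem PencilEquivTo.exists_eq_transform {F G f g : RMat} (h : PencilEquivTo F G f g)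
    (hfg : LinearIndependent ℝ ![f, g]) :
    ∃ (A : RMat) (a b c e : ℝ), F = transform A (a • f + b • g) ∧
      G = transform A (c • f + e • g) ∧ a * e - b * c ≠ 0 := by
  obtain ⟨A, hspan⟩ := h
  have hind : LinearIndependent ℝ ![transform A f, transform A g] := by
    refine LinearIndependent.pair_iff.2 fun s t hst ↦ LinearIndependent.pair_iff.1 hfg s t ?_
    apply transform_injective A.isUnit
    rw [transform_smul_add_smul, hst]
    simp [transform]
  obtain ⟨a, b, c, e, hF, hG, hΔ⟩ := Submodule.exists_eq_combination_of_span_pair_eq hind hspan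
  exact ⟨A, a, b, c, e, by rw [hF, transform_smul_add_smul], by rw [hG, transform_smul_add_smul],
    hΔ⟩

-- `hf`, `hg`, `hfg` say that `det (s f + t g) = trace (f * adjugate g) * s * t ^ 2`.
theorem pc_two_and_ph_three_mul_A1_eq_of_transform {A f g : RMat} {a b c e : ℝ} (hf : f.det = 0)
    (hg : g.det = 0) (hfg : trace (adjugate f * g) = 0)
    (hdF : (transform A (a • f + b • g)).det ≠ 0) :
    let F := transform A (a • f + b • g)
    let G := transform A (c • f + e • g)
    let κ := trace (f * adjugate g) * A.det ^ 2
    let α := trace (adjugate A * adjugate f * (adjugate A)ᵀ)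
    let γ := trace (adjugate A * adjugate g * (adjugate A)ᵀ)
    κ * a * b ^ 2 ≠ 0 ∧
      pc F G 2 = κ ^ 2 * (a * e - b * c) ^ 2 * (b ^ 4 * γ + 2 * a ^ 2 * b ^ 2 * α) ∧
      ph F G 3 * A1 F G = 2 * κ ^ 6 * a ^ 2 * b ^ 8 * (a * e - b * c) ^ 6 * (α * γ) := by
  intro F G κ α γ
  have hφ : phiP F G = C κ * (C a * X + C c) * (C b * X + C e) ^ 2 := by
    rw [phiP_transform_smul_add_smul, det_map_C_smul_add_smul_fin_three, hf, hg, hfg]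
    simp only [κ, map_zero, map_mul, map_pow]
    ring
  have hψ := psiP_transform_smul_add_smul A f g a b c e
  have hlead : κ * a * b ^ 2 ≠ 0 := by rwa [← (ph_eq_of_phiP_eq hφ).1, ph_three_eq_det]
  exact ⟨hlead, (pc_eq_of_phiP_eq_of_psiP_eq hφ hψ hlead).1,
    ph_three_mul_A1_eq_of_phiP_eq_of_psiP_eq hφ hψ hlead⟩

theorem linearIndependent_levyII : LinearIndependent ℝ ![levyII_f, levyII_g] := by
  refine LinearIndependent.pair_iff.2 fun s t h ↦ ?_
  have h12 := congrFun (congrFun h 1) 2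
  have h01 := congrFun (congrFun h 0) 1
  simp [levyII_f, levyII_g] at h12 h01
  exact ⟨h12, h01⟩

theorem linearIndependent_levyIIa : LinearIndependent ℝ ![levyIIa_f, levyIIa_g] := by
  refine LinearIndependent.pair_iff.2 fun s t h ↦ ?_
  have h11 := congrFun (congrFun h 1) 1
  have h02 := congrFun (congrFun h 0) 2
  simp [levyIIa_f, levyIIa_g, mXZ] at h11 h02
  exact ⟨h11, h02⟩

theorem levyII_invariants : levyII_f.det = 0 ∧ levyII_g.det = 0 ∧
    trace (adjugate levyII_f * levyII_g) = 0 := by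
  refine ⟨?_, ?_, ?_⟩ <;>
    simp [det_fin_three, adjugate_fin_three, trace_fin_three, levyII_f, levyII_g]

theorem levyIIa_invariants : levyIIa_f.det = 0 ∧ levyIIa_g.det = 0 ∧
    trace (adjugate levyIIa_f * levyIIa_g) = 0 := by
  refine ⟨?_, ?_, ?_⟩ <;>
    simp [det_fin_three, adjugate_fin_three, trace_fin_three, levyIIa_f, levyIIa_g, mXZ]

theorem adjugate_levyII_f :
    adjugate levyII_f = (-1 / 4 : ℝ) • vecMulVec ![1, 0, 0] ![1, 0, 0] := by
  ext i j
  fin_cases i <;> fin_cases j <;> simp [adjugate_fin_three, levyII_f, vecMulVec]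
  all_goals norm_num

theorem adjugate_levyII_g :
    adjugate levyII_g = (-1 / 4 : ℝ) • vecMulVec ![0, 1, 1] ![0, 1, 1] := by
  ext i j
  fin_cases i <;> fin_cases j <;> simp [adjugate_fin_three, levyII_g, vecMulVec]
  all_goals norm_num

theorem adjugate_levyIIa_f : adjugate levyIIa_f = vecMulVec ![1, 0, 0] ![1, 0, 0] := by
  ext i j
  fin_cases i <;> fin_cases j <;> simp [adjugate_fin_three, levyIIa_f, vecMulVec]

theorem adjugate_levyIIa_g :
    adjugate levyIIa_g = (-1 / 4 : ℝ) • vecMulVec ![0, 1, 0] ![0, 1, 0] := by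
  ext i j
  fin_cases i <;> fin_cases j <;> simp [adjugate_fin_three, levyIIa_g, mXZ, vecMulVec]
  all_goals norm_num

theorem levyII_conj_trace_neg {A : RMat} (hA : A.det ≠ 0) :
    trace (adjugate A * adjugate levyII_f * (adjugate A)ᵀ) < 0 ∧
      trace (adjugate A * adjugate levyII_g * (adjugate A)ᵀ) < 0 := by
  have hB : (adjugate A).det ≠ 0 := by simpa [det_adjugate] using hA
  simp only [adjugate_levyII_f, adjugate_levyII_g, Matrix.mul_smul, Matrix.smul_mul, trace_smul,
    smul_eq_mul]
  exact ⟨mul_neg_of_neg_of_pos (by norm_num)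
      (trace_mul_vecMulVec_mul_transpose_pos hB (Function.ne_iff.2 ⟨0, by simp⟩)),
    mul_neg_of_neg_of_pos (by norm_num)
      (trace_mul_vecMulVec_mul_transpose_pos hB (Function.ne_iff.2 ⟨1, by simp⟩))⟩

theorem levyIIa_conj_trace_pos_neg {A : RMat} (hA : A.det ≠ 0) :
    0 < trace (adjugate A * adjugate levyIIa_f * (adjugate A)ᵀ) ∧
      trace (adjugate A * adjugate levyIIa_g * (adjugate A)ᵀ) < 0 := by
  have hB : (adjugate A).det ≠ 0 := by simpa [det_adjugate] using hA
  simp only [adjugate_levyIIa_f, adjugate_levyIIa_g, Matrix.mul_smul, Matrix.smul_mul, trace_smul,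
    smul_eq_mul]
  exact ⟨trace_mul_vecMulVec_mul_transpose_pos hB (Function.ne_iff.2 ⟨0, by simp⟩),
    mul_neg_of_neg_of_pos (by norm_num)
      (trace_mul_vecMulVec_mul_transpose_pos hB (Function.ne_iff.2 ⟨1, by simp⟩))⟩

theorem two_mul_pow_mul_pos {κ a b Δ : ℝ} (hlead : κ * a * b ^ 2 ≠ 0) (hΔ : Δ ≠ 0) :
    0 < 2 * κ ^ 6 * a ^ 2 * b ^ 8 * Δ ^ 6 := by
  obtain ⟨⟨hκ, ha⟩, hb⟩ : (κ ≠ 0 ∧ a ≠ 0) ∧ b ≠ 0 := by simpa using hlead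
  positivity

theorem sq_mul_sq_mul_neg {κ a b Δ α γ : ℝ} (hlead : κ * a * b ^ 2 ≠ 0) (hΔ : Δ ≠ 0)
    (hα : α < 0) (hγ : γ < 0) :
    κ ^ 2 * Δ ^ 2 * (b ^ 4 * γ + 2 * a ^ 2 * b ^ 2 * α) < 0 := by
  obtain ⟨⟨hκ, ha⟩, hb⟩ : (κ ≠ 0 ∧ a ≠ 0) ∧ b ≠ 0 := by simpa using hlead
  have : b ^ 4 * γ < 0 := mul_neg_of_pos_of_neg (by positivity) hγ
  have : 2 * a ^ 2 * b ^ 2 * α < 0 := mul_neg_of_pos_of_neg (by positivity) hα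
  exact mul_neg_of_pos_of_neg (by positivity) (by linarith)

theorem discrimination_II_vs_IIa_general (F G : RMat) (hdF : F.det ≠ 0) :
    (PencilEquivTo F G levyII_f levyII_g → pc F G 2 < 0 ∧ 0 < ph F G 3 * A1 F G) ∧
    (PencilEquivTo F G levyIIa_f levyIIa_g →
      pc F G 2 = 0 ∨ ph F G 3 * A1 F G < 0) := by
  refine ⟨fun h ↦ ?_, fun h ↦ ?_⟩
  · obtain ⟨A, a, b, c, e, rfl, rfl, hΔ⟩ := h.exists_eq_transform linearIndependent_levyII
    obtain ⟨hf, hg, hfg⟩ := levyII_invariants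
    obtain ⟨hlead, hp, hA1⟩ := pc_two_and_ph_three_mul_A1_eq_of_transform hf hg hfg hdF
    have hA : A.det ≠ 0 := fun h ↦ hlead (by simp [h])
    obtain ⟨hα, hγ⟩ := levyII_conj_trace_neg hA
    rw [hp, hA1]
    exact ⟨sq_mul_sq_mul_neg hlead hΔ hα hγ,
      mul_pos (two_mul_pow_mul_pos hlead hΔ) (mul_pos_of_neg_of_neg hα hγ)⟩
  · obtain ⟨A, a, b, c, e, rfl, rfl, hΔ⟩ := h.exists_eq_transform linearIndependent_levyIIa
    obtain ⟨hf, hg, hfg⟩ := levyIIa_invariants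
    obtain ⟨hlead, -, hA1⟩ := pc_two_and_ph_three_mul_A1_eq_of_transform hf hg hfg hdF
    have hA : A.det ≠ 0 := fun h ↦ hlead (by simp [h])
    obtain ⟨hα, hγ⟩ := levyIIa_conj_trace_pos_neg hA
    rw [hA1]
    exact Or.inr <|
      mul_neg_of_pos_of_neg (two_mul_pow_mul_pos hlead hΔ) (mul_neg_of_pos_of_neg hα hγ)

/-- **Proposition.** Discrimination between orbits II and IIa. -/
theorem discrimination_II_vs_IIa (F G : RMat)
    (hF : F.IsSymm) (hG : G.IsSymm) (hdF : F.det ≠ 0) (hdG : G.det ≠ 0) :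
    (PencilEquivTo F G levyII_f levyII_g → pc F G 2 < 0 ∧ 0 < ph F G 3 * A1 F G) ∧
    (PencilEquivTo F G levyIIa_f levyIIa_g →
      pc F G 2 = 0 ∨ ph F G 3 * A1 F G < 0) :=
  discrimination_II_vs_IIa_general F G hdF
end
end

section
/- Let f, g be nondegenerate real ternary quadratic forms generating a pencil in orbit III or IIIa. If the pencil is in orbit III, then p₂ < 0; if it is in orbit IIIa, then p₂ > 0. -/
open Matrix Polynomial Set

noncomputable section

/-! ### Auxiliary machinery for the proof -/

set_option maxHeartbeats 4000000 in
private theorem phi_expand (F G : RMat) : phiP F G =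
    C ((-1)*F 0 2*F 1 1*F 2 0 + F 0 2*F 1 0*F 2 1 + F 0 1*F 1 2*F 2 0 + (-1)*F 0 1*F 1 0*F 2 2 + (-1)*F 0 0*F 1 2*F 2 1 + F 0 0*F 1 1*F 2 2) * X^3 + C ((-1)*F 1 2*F 2 1*G 0 0 + F 1 2*F 2 0*G 0 1 + F 1 1*F 2 2*G 0 0 + (-1)*F 1 1*F 2 0*G 0 2 + (-1)*F 1 0*F 2 2*G 0 1 + F 1 0*F 2 1*G 0 2 + F 0 2*F 2 1*G 1 0 + (-1)*F 0 2*F 2 0*G 1 1 + (-1)*F 0 2*F 1 1*G 2 0 + F 0 2*F 1 0*G 2 1 + (-1)*F 0 1*F 2 2*G 1 0 + F 0 1*F 2 0*G 1 2 + F 0 1*F 1 2*G 2 0 + (-1)*F 0 1*F 1 0*G 2 2 + F 0 0*F 2 2*G 1 1 + (-1)*F 0 0*F 2 1*G 1 2 + (-1)*F 0 0*F 1 2*G 2 1 + F 0 0*F 1 1*G 2 2) * X^2 + C ((-1)*F 2 2*G 0 1*G 1 0 + F 2 2*G 0 0*G 1 1 + F 2 1*G 0 2*G 1 0 + (-1)*F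 2 1*G 0 0*G 1 2 + (-1)*F 2 0*G 0 2*G 1 1 + F 2 0*G 0 1*G 1 2 + F 1 2*G 0 1*G 2 0 + (-1)*F 1 2*G 0 0*G 2 1 + (-1)*F 1 1*G 0 2*G 2 0 + F 1 1*G 0 0*G 2 2 + F 1 0*G 0 2*G 2 1 + (-1)*F 1 0*G 0 1*G 2 2 + (-1)*F 0 2*G 1 1*G 2 0 + F 0 2*G 1 0*G 2 1 + F 0 1*G 1 2*G 2 0 + (-1)*F 0 1*G 1 0*G 2 2 + (-1)*F 0 0*G 1 2*G 2 1 + F 0 0*G 1 1*G 2 2) * X + C ((-1)*G 0 2*G 1 1*G 2 0 + G 0 2*G 1 0*G 2 1 + G 0 1*G 1 2*G 2 0 + (-1)*G 0 1*G 1 0*G 2 2 + (-1)*G 0 0*G 1 2*G 2 1 + G 0 0*G 1 1*G 2 2) := by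
  unfold phiP pencilPolyMat
  rw [Matrix.det_fin_three]
  simp only [Matrix.of_apply, map_add, _root_.map_mul, map_sub, map_neg, _root_.map_one]
  ring1

private theorem charpoly_coeff1 {R : Type*} [CommRing R] (M : Matrix (Fin 3) (Fin 3) R) :
    M.charpoly.coeff 1 =
      M 0 0*M 1 1 - M 0 1*M 1 0 + (M 0 0*M 2 2 - M 0 2*M 2 0) + (M 1 1*M 2 2 - M 1 2*M 2 1) := by
  rw [Matrix.charpoly, Matrix.det_fin_three]
  rw [Matrix.charmatrix_apply_eq, Matrix.charmatrix_apply_eq, Matrix.charmatrix_apply_eq,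
    Matrix.charmatrix_apply_ne _ _ _ (by decide), Matrix.charmatrix_apply_ne _ _ _ (by decide),
    Matrix.charmatrix_apply_ne _ _ _ (by decide), Matrix.charmatrix_apply_ne _ _ _ (by decide),
    Matrix.charmatrix_apply_ne _ _ _ (by decide), Matrix.charmatrix_apply_ne _ _ _ (by decide)]
  have h : (X - C (M 0 0)) * (X - C (M 1 1)) * (X - C (M 2 2)) - (X - C (M 0 0)) * -C (M 1 2) * -C (M 2 1) -
      -C (M 0 1) * -C (M 1 0) * (X - C (M 2 2)) + -C (M 0 1) * -C (M 1 2) * -C (M 2 0) +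
      -C (M 0 2) * -C (M 1 0) * -C (M 2 1) - -C (M 0 2) * (X - C (M 1 1)) * -C (M 2 0) =
      X^3 - C (M 0 0 + M 1 1 + M 2 2) * X^2
        + C (M 0 0*M 1 1 - M 0 1*M 1 0 + (M 0 0*M 2 2 - M 0 2*M 2 0) + (M 1 1*M 2 2 - M 1 2*M 2 1)) * X
        - C (M 0 0*M 1 1*M 2 2 - M 0 0*M 1 2*M 2 1 - M 0 1*M 1 0*M 2 2 + M 0 1*M 1 2*M 2 0
            + M 0 2*M 1 0*M 2 1 - M 0 2*M 1 1*M 2 0) := by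
    simp only [map_add, _root_.map_mul, map_sub, map_neg, _root_.map_one]
    ring1
  rw [h]
  simp only [coeff_add, coeff_sub, coeff_C_mul, coeff_X_pow, coeff_C]
  norm_num

set_option maxHeartbeats 4000000 in
private theorem psi_expand (F G : RMat) : psiP F G =
    C ((-1)*F 1 2*F 2 1 + F 1 1*F 2 2 + (-1)*F 0 2*F 2 0 + (-1)*F 0 1*F 1 0 + F 0 0*F 2 2 + F 0 0*F 1 1) * X^2 + C (F 2 2*G 1 1 + F 2 2*G 0 0 + (-1)*F 2 1*G 1 2 + (-1)*F 2 0*G 0 2 + (-1)*F 1 2*G 2 1 + F 1 1*G 2 2 + F 1 1*G 0 0 + (-1)*F 1 0*G 0 1 + (-1)*F 0 2*G 2 0 + (-1)*F 0 1*G 1 0 + F 0 0*G 2 2 + F 0 0*G 1 1) * X + C ((-1)*G 1 2*G 2 1 + G 1 1*G 2 2 + (-1)*G 0 2*G 2 0 + (-1)*G 0 1*G 1 0 + G 0 0*G 2 2 + G 0 0*G 1 1) := by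
  unfold psiP
  rw [charpoly_coeff1]
  simp only [pencilPolyMat, Matrix.of_apply]
  simp only [map_add, _root_.map_mul, map_sub, map_neg, _root_.map_one]
  ring1

private theorem poly_decomp3 (p : Polynomial ℝ) (hp : p.natDegree < 4) :
    p = C (p.coeff 3) * X^3 + C (p.coeff 2) * X^2 + C (p.coeff 1) * X + C (p.coeff 0) := by
  conv_lhs => rw [p.as_sum_range' 4 hp]
  simp only [Finset.sum_range_succ, Finset.sum_range_zero, zero_add, ← C_mul_X_pow_eq_monomial]
  ring

private theorem poly_decomp2 (p : Polynomial ℝ) (hp : p.natDegree < 3) :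
    p = C (p.coeff 2) * X^2 + C (p.coeff 1) * X + C (p.coeff 0) := by
  conv_lhs => rw [p.as_sum_range' 3 hp]
  simp only [Finset.sum_range_succ, Finset.sum_range_zero, zero_add, ← C_mul_X_pow_eq_monomial]
  ring

private theorem phi_decomp (F G : RMat) : phiP F G =
    C (ph F G 3) * X^3 + C (ph F G 2) * X^2 + C (ph F G 1) * X + C (ph F G 0) := by
  have hd : (phiP F G).natDegree < 4 := by
    apply Nat.lt_succ_of_le
    rw [phi_expand]
    compute_degree
  exact poly_decomp3 _ hd

private theorem psi_decomp (F G : RMat) : psiP F G =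
    C ((psiP F G).coeff 2) * X^2 + C ((psiP F G).coeff 1) * X + C ((psiP F G).coeff 0) := by
  have hd : (psiP F G).natDegree < 3 := by
    apply Nat.lt_succ_of_le
    rw [psi_expand]
    compute_degree
  exact poly_decomp2 _ hd

private theorem ph3_eq (F G : RMat) : ph F G 3 = (-1)*F 0 2*F 1 1*F 2 0 + F 0 2*F 1 0*F 2 1 + F 0 1*F 1 2*F 2 0 + (-1)*F 0 1*F 1 0*F 2 2 + (-1)*F 0 0*F 1 2*F 2 1 + F 0 0*F 1 1*F 2 2 := by
  show (phiP F G).coeff 3 = _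
  rw [phi_expand]
  simp only [coeff_add, coeff_C_mul, coeff_X_pow, coeff_C, coeff_X]
  norm_num

private theorem ph2_eq (F G : RMat) : ph F G 2 = (-1)*F 1 2*F 2 1*G 0 0 + F 1 2*F 2 0*G 0 1 + F 1 1*F 2 2*G 0 0 + (-1)*F 1 1*F 2 0*G 0 2 + (-1)*F 1 0*F 2 2*G 0 1 + F 1 0*F 2 1*G 0 2 + F 0 2*F 2 1*G 1 0 + (-1)*F 0 2*F 2 0*G 1 1 + (-1)*F 0 2*F 1 1*G 2 0 + F 0 2*F 1 0*G 2 1 + (-1)*F 0 1*F 2 2*G 1 0 + F 0 1*F 2 0*G 1 2 + F 0 1*F 1 2*G 2 0 + (-1)*F 0 1*F 1 0*G 2 2 + F 0 0*F 2 2*G 1 1 + (-1)*F 0 0*F 2 1*G 1 2 + (-1)*F 0 0*F 1 2*G 2 1 + F 0 0*F 1 1*G 2 2 := by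
  show (phiP F G).coeff 2 = _
  rw [phi_expand]
  simp only [coeff_add, coeff_C_mul, coeff_X_pow, coeff_C, coeff_X]
  norm_num

private theorem ph1_eq (F G : RMat) : ph F G 1 = (-1)*F 2 2*G 0 1*G 1 0 + F 2 2*G 0 0*G 1 1 + F 2 1*G 0 2*G 1 0 + (-1)*F 2 1*G 0 0*G 1 2 + (-1)*F 2 0*G 0 2*G 1 1 + F 2 0*G 0 1*G 1 2 + F 1 2*G 0 1*G 2 0 + (-1)*F 1 2*G 0 0*G 2 1 + (-1)*F 1 1*G 0 2*G 2 0 + F 1 1*G 0 0*G 2 2 + F 1 0*G 0 2*G 2 1 + (-1)*F 1 0*G 0 1*G 2 2 + (-1)*F 0 2*G 1 1*G 2 0 + F 0 2*G 1 0*G 2 1 + F 0 1*G 1 2*G 2 0 + (-1)*F 0 1*G 1 0*G 2 2 + (-1)*F 0 0*G 1 2*G 2 1 + F 0 0*G 1 1*G 2 2 := by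
  show (phiP F G).coeff 1 = _
  rw [phi_expand]
  simp only [coeff_add, coeff_C_mul, coeff_X_pow, coeff_C, coeff_X]
  norm_num

private theorem ps2_eq (F G : RMat) : (psiP F G).coeff 2 = (-1)*F 1 2*F 2 1 + F 1 1*F 2 2 + (-1)*F 0 2*F 2 0 + (-1)*F 0 1*F 1 0 + F 0 0*F 2 2 + F 0 0*F 1 1 := by
  rw [psi_expand]
  simp only [coeff_add, coeff_C_mul, coeff_X_pow, coeff_C, coeff_X]
  norm_num

private theorem ps1_eq (F G : RMat) : (psiP F G).coeff 1 = F 2 2*G 1 1 + F 2 2*G 0 0 + (-1)*F 2 1*G 1 2 + (-1)*F 2 0*G 0 2 + (-1)*F 1 2*G 2 1 + F 1 1*G 2 2 + F 1 1*G 0 0 + (-1)*F 1 0*G 0 1 + (-1)*F 0 2*G 2 0 + (-1)*F 0 1*G 1 0 + F 0 0*G 2 2 + F 0 0*G 1 1 := by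
  rw [psi_expand]
  simp only [coeff_add, coeff_C_mul, coeff_X_pow, coeff_C, coeff_X]
  norm_num

private theorem ps0_eq (F G : RMat) : (psiP F G).coeff 0 = (-1)*G 1 2*G 2 1 + G 1 1*G 2 2 + (-1)*G 0 2*G 2 0 + (-1)*G 0 1*G 1 0 + G 0 0*G 2 2 + G 0 0*G 1 1 := by
  rw [psi_expand]
  simp only [coeff_add, coeff_C_mul, coeff_X_pow, coeff_C, coeff_X]
  norm_num

set_option maxHeartbeats 4000000 in
private theorem pc_formula (F G : RMat) (h3 : ph F G 3 ≠ 0) :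
    pc F G 2 =
      ((ph F G 3)*(3*(ph F G 3)*((psiP F G).coeff 0)+2*(ph F G 2)*((psiP F G).coeff 1)+(ph F G 1)*((psiP F G).coeff 2))*(ph F G 3)^2
        - (ph F G 3)*(3*(ph F G 3)*((psiP F G).coeff 2))*(ph F G 1)*(ph F G 3)
        - ((ph F G 3)*(3*(ph F G 3)*((psiP F G).coeff 1)+2*(ph F G 2)*((psiP F G).coeff 2))*(ph F G 3)
            - (ph F G 3)*(3*(ph F G 3)*((psiP F G).coeff 2))*(ph F G 2))*(ph F G 2)) / (ph F G 3)^2 := by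
  set c3 := ph F G 3 with hc3
  set c2 := ph F G 2 with hc2
  set c1 := ph F G 1 with hc1
  set c0 := ph F G 0 with hc0
  set s2 := (psiP F G).coeff 2 with hs2
  set s1 := (psiP F G).coeff 1 with hs1
  set s0 := (psiP F G).coeff 0 with hs0
  set n4 : ℝ := c3*(3*c3*s2) with hn4
  set n3 : ℝ := c3*(3*c3*s1+2*c2*s2) with hn3
  set n2 : ℝ := c3*(3*c3*s0+2*c2*s1+c1*s2) with hn2
  set n1 : ℝ := c3*(2*c2*s0+c1*s1) with hn1
  set n0 : ℝ := c3*(c1*s0) with hn0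
  set Q0 : ℝ := n3*c3 - n4*c2 with hQ0
  set R2 : ℝ := n2*c3^2 - n4*c1*c3 - Q0*c2 with hR2
  set R1 : ℝ := n1*c3^2 - n4*c0*c3 - Q0*c1 with hR1
  set R0 : ℝ := n0*c3^2 - Q0*c0 with hR0
  have hφ : phiP F G = C c3 * X^3 + C c2 * X^2 + C c1 * X + C c0 := phi_decomp F G
  have hψ : psiP F G = C s2 * X^2 + C s1 * X + C s0 := psi_decomp F G
  have hder : derivative (phiP F G) = C (3*c3) * X^2 + C (2*c2) * X + C c1 := by
    rw [hφ]
    simp only [derivative_add, derivative_C_mul, derivative_X_pow, derivative_X, derivative_C,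
      Nat.cast_ofNat, map_ofNat, _root_.map_mul]
    norm_num
    ring1
  have hN : C (ph F G 3) * psiP F G * derivative (phiP F G)
      = C n4*X^4 + C n3*X^3 + C n2*X^2 + C n1*X + C n0 := by
    rw [hψ, hder, ← hc3, hn4, hn3, hn2, hn1, hn0]
    simp only [map_add, _root_.map_mul, map_ofNat]
    ring1
  have hφne : phiP F G ≠ 0 := by
    intro h
    apply h3
    rw [hc3]
    show (phiP F G).coeff 3 = 0
    rw [h, Polynomial.coeff_zero]
  have hdeg : (phiP F G).degree = 3 := by
    rw [hφ]
    compute_degree!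
  have hlc : (phiP F G).leadingCoeff = c3 := by
    rw [Polynomial.leadingCoeff, natDegree_eq_of_degree_eq_some hdeg]
    exact rfl
  set φm := phiP F G * C c3⁻¹ with hφm
  have hmonic : φm.Monic := by
    have := monic_mul_leadingCoeff_inv hφne
    rwa [hlc] at this
  have hdegm : φm.degree = 3 := by
    rw [hφm, ← hlc]
    rw [degree_mul_leadingCoeff_inv _ hφne]
    exact hdeg
  set r : Polynomial ℝ := C (R2/c3^2) * X^2 + C (R1/c3^2) * X + C (R0/c3^2) with hr
  set qq : Polynomial ℝ := C n4 * X + C (Q0/c3) with hq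
  have key : r + φm * qq = C (ph F G 3) * psiP F G * derivative (phiP F G) := by
    rw [hN, hr, hq, hφm, hφ]
    apply Polynomial.funext
    intro x
    simp only [eval_add, eval_mul, eval_pow, eval_C, eval_X]
    rw [hR2, hR1, hR0, hQ0, hn4, hn3, hn2, hn1, hn0]
    field_simp
    ring1
  have hmod := (div_modByMonic_unique qq r hmonic ⟨key, by
      rw [hdegm, hr]
      exact lt_of_le_of_lt (Polynomial.degree_quadratic_le) (by decide)⟩).2
  have hP : Prem F G = r := by
    rw [Prem, Polynomial.mod_def, hlc, ← hφm, hmod]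
  rw [pc, hP, hr]
  simp only [coeff_add, coeff_C_mul, coeff_X_pow, coeff_C, coeff_X]
  norm_num

private theorem sumsq_pos {B0 B1 B2 x y z Dx : ℝ} (hDxne : Dx ≠ 0)
    (hcombo : Dx = x*B0 + y*B1 + z*B2) : 0 < B0^2 + B1^2 + B2^2 := by
  rcases lt_or_ge 0 (B0^2 + B1^2 + B2^2) with h|h
  · exact h
  · exfalso
    have q0 : B0 = 0 := by nlinarith [sq_nonneg B0, sq_nonneg B1, sq_nonneg B2]
    have q1 : B1 = 0 := by nlinarith [sq_nonneg B0, sq_nonneg B1, sq_nonneg B2]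
    have q2 : B2 = 0 := by nlinarith [sq_nonneg B0, sq_nonneg B1, sq_nonneg B2]
    apply hDxne
    rw [hcombo, q0, q1, q2]
    ring

set_option maxHeartbeats 4000000 in
private theorem auxIII (A : RMat) (hdA : A.det ≠ 0) (a b c d : ℝ) (F G : RMat)
    (hF : F = a • transform A levyIII_f + b • transform A levyIII_g)
    (hG : G = c • transform A levyIII_f + d • transform A levyIII_g)
    (hpl : a*d - b*c ≠ 0) (hdF : F.det ≠ 0) : pc F G 2 < 0 := by
  obtain ⟨Dx, hDx⟩ : ∃ x : ℝ, x = (-1)*A 0 2*A 1 1*A 2 0 + A 0 2*A 1 0*A 2 1 + A 0 1*A 1 2*A 2 0 + (-1)*A 0 1*A 1 0*A 2 2 + (-1)*A 0 0*A 1 2*A 2 1 + A 0 0*A 1 1*A 2 2 := ⟨_, rfl⟩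
  obtain ⟨B0, hB0⟩ : ∃ x : ℝ, x = A 0 2*A 2 1 + (-1)*A 0 1*A 2 2 := ⟨_, rfl⟩
  obtain ⟨B1, hB1⟩ : ∃ x : ℝ, x = (-1)*A 0 2*A 2 0 + A 0 0*A 2 2 := ⟨_, rfl⟩
  obtain ⟨B2, hB2⟩ : ∃ x : ℝ, x = A 0 1*A 2 0 + (-1)*A 0 0*A 2 1 := ⟨_, rfl⟩
  obtain ⟨al, hal⟩ : ∃ x : ℝ, x = A 0 2*A 1 1*A 1 2*A 2 1 + (-1)*A 0 2*A 1 1*A 1 1*A 2 2 + A 0 2*A 1 0*A 1 2*A 2 0 + (-1)*A 0 2*A 1 0*A 1 0*A 2 2 + (-1)*A 0 1*A 1 2*A 1 2*A 2 1 + A 0 1*A 1 1*A 1 2*A 2 2 + A 0 1*A 1 0*A 1 1*A 2 0 + (-1)*A 0 1*A 1 0*A 1 0*A 2 1 + (-1)*A 0 0*A 1 2*A 1 2*A 2 0 + (-1)*A 0 0*A 1 1*A 1 1*A 2 0 + A 0 0*A 1 0*A 1 2*A 2 2 + A 0 0*A 1 0*A 1 1*A 2 1 := ⟨_, rfl⟩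
  obtain ⟨be, hbe⟩ : ∃ x : ℝ, x = B0^2 + B1^2 + B2^2 := ⟨_, rfl⟩
  have hFe00 : F 0 0 = A 1 0*A 1 0*b + A 0 0*A 2 0*a := by
    rw [hF]
    simp [transform, levyIII_f, levyIII_g, mXZ, Matrix.mul_apply, Fin.sum_univ_three,
      -mul_eq_mul_left_iff, -mul_eq_mul_right_iff]
    ring
  have hFe01 : F 0 1 = A 1 0*A 1 1*b + (1/2)*A 0 1*A 2 0*a + (1/2)*A 0 0*A 2 1*a := by
    rw [hF]
    simp [transform, levyIII_f, levyIII_g, mXZ, Matrix.mul_apply, Fin.sum_univ_three,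
      -mul_eq_mul_left_iff, -mul_eq_mul_right_iff]
    ring
  have hFe02 : F 0 2 = A 1 0*A 1 2*b + (1/2)*A 0 2*A 2 0*a + (1/2)*A 0 0*A 2 2*a := by
    rw [hF]
    simp [transform, levyIII_f, levyIII_g, mXZ, Matrix.mul_apply, Fin.sum_univ_three,
      -mul_eq_mul_left_iff, -mul_eq_mul_right_iff]
    ring
  have hFe10 : F 1 0 = A 1 0*A 1 1*b + (1/2)*A 0 1*A 2 0*a + (1/2)*A 0 0*A 2 1*a := by
    rw [hF]
    simp [transform, levyIII_f, levyIII_g, mXZ, Matrix.mul_apply, Fin.sum_univ_three,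
      -mul_eq_mul_left_iff, -mul_eq_mul_right_iff]
    ring
  have hFe11 : F 1 1 = A 1 1*A 1 1*b + A 0 1*A 2 1*a := by
    rw [hF]
    simp [transform, levyIII_f, levyIII_g, mXZ, Matrix.mul_apply, Fin.sum_univ_three,
      -mul_eq_mul_left_iff, -mul_eq_mul_right_iff]
    ring
  have hFe12 : F 1 2 = A 1 1*A 1 2*b + (1/2)*A 0 2*A 2 1*a + (1/2)*A 0 1*A 2 2*a := by
    rw [hF]
    simp [transform, levyIII_f, levyIII_g, mXZ, Matrix.mul_apply, Fin.sum_univ_three,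
      -mul_eq_mul_left_iff, -mul_eq_mul_right_iff]
    ring
  have hFe20 : F 2 0 = A 1 0*A 1 2*b + (1/2)*A 0 2*A 2 0*a + (1/2)*A 0 0*A 2 2*a := by
    rw [hF]
    simp [transform, levyIII_f, levyIII_g, mXZ, Matrix.mul_apply, Fin.sum_univ_three,
      -mul_eq_mul_left_iff, -mul_eq_mul_right_iff]
    ring
  have hFe21 : F 2 1 = A 1 1*A 1 2*b + (1/2)*A 0 2*A 2 1*a + (1/2)*A 0 1*A 2 2*a := by
    rw [hF]
    simp [transform, levyIII_f, levyIII_g, mXZ, Matrix.mul_apply, Fin.sum_univ_three,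
      -mul_eq_mul_left_iff, -mul_eq_mul_right_iff]
    ring
  have hFe22 : F 2 2 = A 1 2*A 1 2*b + A 0 2*A 2 2*a := by
    rw [hF]
    simp [transform, levyIII_f, levyIII_g, mXZ, Matrix.mul_apply, Fin.sum_univ_three,
      -mul_eq_mul_left_iff, -mul_eq_mul_right_iff]
    ring
  have hGe00 : G 0 0 = A 1 0*A 1 0*d + A 0 0*A 2 0*c := by
    rw [hG]
    simp [transform, levyIII_f, levyIII_g, mXZ, Matrix.mul_apply, Fin.sum_univ_three,
      -mul_eq_mul_left_iff, -mul_eq_mul_right_iff]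
    ring
  have hGe01 : G 0 1 = A 1 0*A 1 1*d + (1/2)*A 0 1*A 2 0*c + (1/2)*A 0 0*A 2 1*c := by
    rw [hG]
    simp [transform, levyIII_f, levyIII_g, mXZ, Matrix.mul_apply, Fin.sum_univ_three,
      -mul_eq_mul_left_iff, -mul_eq_mul_right_iff]
    ring
  have hGe02 : G 0 2 = A 1 0*A 1 2*d + (1/2)*A 0 2*A 2 0*c + (1/2)*A 0 0*A 2 2*c := by
    rw [hG]
    simp [transform, levyIII_f, levyIII_g, mXZ, Matrix.mul_apply, Fin.sum_univ_three,
      -mul_eq_mul_left_iff, -mul_eq_mul_right_iff]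
    ring
  have hGe10 : G 1 0 = A 1 0*A 1 1*d + (1/2)*A 0 1*A 2 0*c + (1/2)*A 0 0*A 2 1*c := by
    rw [hG]
    simp [transform, levyIII_f, levyIII_g, mXZ, Matrix.mul_apply, Fin.sum_univ_three,
      -mul_eq_mul_left_iff, -mul_eq_mul_right_iff]
    ring
  have hGe11 : G 1 1 = A 1 1*A 1 1*d + A 0 1*A 2 1*c := by
    rw [hG]
    simp [transform, levyIII_f, levyIII_g, mXZ, Matrix.mul_apply, Fin.sum_univ_three,
      -mul_eq_mul_left_iff, -mul_eq_mul_right_iff]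
    ring
  have hGe12 : G 1 2 = A 1 1*A 1 2*d + (1/2)*A 0 2*A 2 1*c + (1/2)*A 0 1*A 2 2*c := by
    rw [hG]
    simp [transform, levyIII_f, levyIII_g, mXZ, Matrix.mul_apply, Fin.sum_univ_three,
      -mul_eq_mul_left_iff, -mul_eq_mul_right_iff]
    ring
  have hGe20 : G 2 0 = A 1 0*A 1 2*d + (1/2)*A 0 2*A 2 0*c + (1/2)*A 0 0*A 2 2*c := by
    rw [hG]
    simp [transform, levyIII_f, levyIII_g, mXZ, Matrix.mul_apply, Fin.sum_univ_three,
      -mul_eq_mul_left_iff, -mul_eq_mul_right_iff]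
    ring
  have hGe21 : G 2 1 = A 1 1*A 1 2*d + (1/2)*A 0 2*A 2 1*c + (1/2)*A 0 1*A 2 2*c := by
    rw [hG]
    simp [transform, levyIII_f, levyIII_g, mXZ, Matrix.mul_apply, Fin.sum_univ_three,
      -mul_eq_mul_left_iff, -mul_eq_mul_right_iff]
    ring
  have hGe22 : G 2 2 = A 1 2*A 1 2*d + A 0 2*A 2 2*c := by
    rw [hG]
    simp [transform, levyIII_f, levyIII_g, mXZ, Matrix.mul_apply, Fin.sum_univ_three,
      -mul_eq_mul_left_iff, -mul_eq_mul_right_iff]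
    ring
  have hAdet : A.det = Dx := by
    rw [Matrix.det_fin_three, hDx]
    ring
  have hDxne : Dx ≠ 0 := fun h => hdA (by rw [hAdet, h])
  have hFdet : F.det = (-1/4)*(a^2*b)*Dx^2 := by
    rw [Matrix.det_fin_three]
    simp only [hFe00, hFe01, hFe02, hFe10, hFe11, hFe12, hFe20, hFe21, hFe22]
    rw [hDx]
    ring
  have ha : a ≠ 0 := by
    intro h
    apply hdF
    rw [hFdet, h]
    ring
  have hb : b ≠ 0 := by
    intro h
    apply hdF
    rw [hFdet, h]
    ring
  have hc3vne : ((-1/4)*(a^2*b)*Dx^2 : ℝ) ≠ 0 := mul_ne_zero (mul_ne_zero (by norm_num) (mul_ne_zero (pow_ne_zero 2 ha) hb)) (pow_ne_zero 2 hDxne)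
  have hc3 : ph F G 3 = (-1/4)*(a^2*b)*Dx^2 := by
    rw [ph3_eq]
    simp only [hFe00, hFe01, hFe02, hFe10, hFe11, hFe12, hFe20, hFe21, hFe22, hGe00, hGe01, hGe02, hGe10, hGe11, hGe12, hGe20, hGe21, hGe22]
    rw [hDx]
    ring
  have hc2 : ph F G 2 = (-1/4)*(a^2*d+2*(a*b*c))*Dx^2 := by
    rw [ph2_eq]
    simp only [hFe00, hFe01, hFe02, hFe10, hFe11, hFe12, hFe20, hFe21, hFe22, hGe00, hGe01, hGe02, hGe10, hGe11, hGe12, hGe20, hGe21, hGe22]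
    rw [hDx]
    ring
  have hc1 : ph F G 1 = (-1/4)*(2*(a*c*d)+b*c^2)*Dx^2 := by
    rw [ph1_eq]
    simp only [hFe00, hFe01, hFe02, hFe10, hFe11, hFe12, hFe20, hFe21, hFe22, hGe00, hGe01, hGe02, hGe10, hGe11, hGe12, hGe20, hGe21, hGe22]
    rw [hDx]
    ring
  have hs2 : (psiP F G).coeff 2 = -((a*b)*al + (1/4)*a^2*be) := by
    rw [ps2_eq]
    simp only [hFe00, hFe01, hFe02, hFe10, hFe11, hFe12, hFe20, hFe21, hFe22, hGe00, hGe01, hGe02, hGe10, hGe11, hGe12, hGe20, hGe21, hGe22]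
    rw [hal, hbe, hB0, hB1, hB2]
    ring
  have hs1 : (psiP F G).coeff 1 = -((a*d+b*c)*al + (1/2)*(a*c)*be) := by
    rw [ps1_eq]
    simp only [hFe00, hFe01, hFe02, hFe10, hFe11, hFe12, hFe20, hFe21, hFe22, hGe00, hGe01, hGe02, hGe10, hGe11, hGe12, hGe20, hGe21, hGe22]
    rw [hal, hbe, hB0, hB1, hB2]
    ring
  have hs0 : (psiP F G).coeff 0 = -((c*d)*al + (1/4)*c^2*be) := by
    rw [ps0_eq]
    simp only [hFe00, hFe01, hFe02, hFe10, hFe11, hFe12, hFe20, hFe21, hFe22, hGe00, hGe01, hGe02, hGe10, hGe11, hGe12, hGe20, hGe21, hGe22]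
    rw [hal, hbe, hB0, hB1, hB2]
    ring
  have hc3ne : ph F G 3 ≠ 0 := by
    rw [hc3]
    exact hc3vne
  have hp2 := pc_formula F G hc3ne
  rw [hc3, hc2, hc1, hs2, hs1, hs0] at hp2
  have hkey : pc F G 2 = (-1/64)*(Dx^4*(a*d-b*c)^2*a^4*be) := by
    rw [hp2, div_eq_iff (pow_ne_zero 2 hc3vne)]
    ring
  have hcombo : Dx = A 1 0 * B0 + A 1 1 * B1 + A 1 2 * B2 := by
    rw [hDx, hB0, hB1, hB2]
    ring
  have hbpos : 0 < be := by
    rw [hbe]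
    exact sumsq_pos hDxne hcombo
  have hT : 0 < Dx^4*(a*d-b*c)^2*a^4*be := by
    have h1 : 0 < Dx^4 := lt_of_le_of_ne (by positivity) (Ne.symm (pow_ne_zero 4 hDxne))
    have h2 : 0 < (a*d-b*c)^2 := lt_of_le_of_ne (by positivity) (Ne.symm (pow_ne_zero 2 hpl))
    have h3 : 0 < a^4 := lt_of_le_of_ne (by positivity) (Ne.symm (pow_ne_zero 4 ha))
    exact mul_pos (mul_pos (mul_pos h1 h2) h3) hbpos
  rw [hkey]
  first
  | exact mul_neg_of_neg_of_pos (by norm_num) hT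
  | exact hT

set_option maxHeartbeats 4000000 in
private theorem auxA (A : RMat) (hdA : A.det ≠ 0) (a b c d : ℝ) (F G : RMat)
    (hF : F = a • transform A levyIIIa_f + b • transform A levyIIIa_g)
    (hG : G = c • transform A levyIIIa_f + d • transform A levyIIIa_g)
    (hpl : a*d - b*c ≠ 0) (hdF : F.det ≠ 0) : 0 < pc F G 2 := by
  obtain ⟨Dx, hDx⟩ : ∃ x : ℝ, x = (-1)*A 0 2*A 1 1*A 2 0 + A 0 2*A 1 0*A 2 1 + A 0 1*A 1 2*A 2 0 + (-1)*A 0 1*A 1 0*A 2 2 + (-1)*A 0 0*A 1 2*A 2 1 + A 0 0*A 1 1*A 2 2 := ⟨_, rfl⟩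
  obtain ⟨B0, hB0⟩ : ∃ x : ℝ, x = (-1)*A 0 2*A 1 1 + A 0 1*A 1 2 := ⟨_, rfl⟩
  obtain ⟨B1, hB1⟩ : ∃ x : ℝ, x = A 0 2*A 1 0 + (-1)*A 0 0*A 1 2 := ⟨_, rfl⟩
  obtain ⟨B2, hB2⟩ : ∃ x : ℝ, x = (-1)*A 0 1*A 1 0 + A 0 0*A 1 1 := ⟨_, rfl⟩
  obtain ⟨al, hal⟩ : ∃ x : ℝ, x = A 1 2*A 1 2*A 2 1*A 2 1 + A 1 2*A 1 2*A 2 0*A 2 0 + (-2)*A 1 1*A 1 2*A 2 1*A 2 2 + A 1 1*A 1 1*A 2 2*A 2 2 + A 1 1*A 1 1*A 2 0*A 2 0 + (-2)*A 1 0*A 1 2*A 2 0*A 2 2 + (-2)*A 1 0*A 1 1*A 2 0*A 2 1 + A 1 0*A 1 0*A 2 2*A 2 2 + A 1 0*A 1 0*A 2 1*A 2 1 + A 0 2*A 0 2*A 2 1*A 2 1 + A 0 2*A 0 2*A 2 0*A 2 0 + (-2)*A 0 1*A 0 2*A 2 1*A 2 2 + A 0 1*A 0 1*A 2 2*A 2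 2 + A 0 1*A 0 1*A 2 0*A 2 0 + (-2)*A 0 0*A 0 2*A 2 0*A 2 2 + (-2)*A 0 0*A 0 1*A 2 0*A 2 1 + A 0 0*A 0 0*A 2 2*A 2 2 + A 0 0*A 0 0*A 2 1*A 2 1 := ⟨_, rfl⟩
  obtain ⟨be, hbe⟩ : ∃ x : ℝ, x = B0^2 + B1^2 + B2^2 := ⟨_, rfl⟩
  have hFe00 : F 0 0 = A 2 0*A 2 0*b + A 1 0*A 1 0*a + A 0 0*A 0 0*a := by
    rw [hF]
    simp [transform, levyIIIa_f, levyIIIa_g, mXZ, Matrix.mul_apply, Fin.sum_univ_three,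
      -mul_eq_mul_left_iff, -mul_eq_mul_right_iff]
    ring
  have hFe01 : F 0 1 = A 2 0*A 2 1*b + A 1 0*A 1 1*a + A 0 0*A 0 1*a := by
    rw [hF]
    simp [transform, levyIIIa_f, levyIIIa_g, mXZ, Matrix.mul_apply, Fin.sum_univ_three,
      -mul_eq_mul_left_iff, -mul_eq_mul_right_iff]
    ring
  have hFe02 : F 0 2 = A 2 0*A 2 2*b + A 1 0*A 1 2*a + A 0 0*A 0 2*a := by
    rw [hF]
    simp [transform, levyIIIa_f, levyIIIa_g, mXZ, Matrix.mul_apply, Fin.sum_univ_three,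
      -mul_eq_mul_left_iff, -mul_eq_mul_right_iff]
    ring
  have hFe10 : F 1 0 = A 2 0*A 2 1*b + A 1 0*A 1 1*a + A 0 0*A 0 1*a := by
    rw [hF]
    simp [transform, levyIIIa_f, levyIIIa_g, mXZ, Matrix.mul_apply, Fin.sum_univ_three,
      -mul_eq_mul_left_iff, -mul_eq_mul_right_iff]
    ring
  have hFe11 : F 1 1 = A 2 1*A 2 1*b + A 1 1*A 1 1*a + A 0 1*A 0 1*a := by
    rw [hF]
    simp [transform, levyIIIa_f, levyIIIa_g, mXZ, Matrix.mul_apply, Fin.sum_univ_three,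
      -mul_eq_mul_left_iff, -mul_eq_mul_right_iff]
    ring
  have hFe12 : F 1 2 = A 2 1*A 2 2*b + A 1 1*A 1 2*a + A 0 1*A 0 2*a := by
    rw [hF]
    simp [transform, levyIIIa_f, levyIIIa_g, mXZ, Matrix.mul_apply, Fin.sum_univ_three,
      -mul_eq_mul_left_iff, -mul_eq_mul_right_iff]
    ring
  have hFe20 : F 2 0 = A 2 0*A 2 2*b + A 1 0*A 1 2*a + A 0 0*A 0 2*a := by
    rw [hF]
    simp [transform, levyIIIa_f, levyIIIa_g, mXZ, Matrix.mul_apply, Fin.sum_univ_three,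
      -mul_eq_mul_left_iff, -mul_eq_mul_right_iff]
    ring
  have hFe21 : F 2 1 = A 2 1*A 2 2*b + A 1 1*A 1 2*a + A 0 1*A 0 2*a := by
    rw [hF]
    simp [transform, levyIIIa_f, levyIIIa_g, mXZ, Matrix.mul_apply, Fin.sum_univ_three,
      -mul_eq_mul_left_iff, -mul_eq_mul_right_iff]
    ring
  have hFe22 : F 2 2 = A 2 2*A 2 2*b + A 1 2*A 1 2*a + A 0 2*A 0 2*a := by
    rw [hF]
    simp [transform, levyIIIa_f, levyIIIa_g, mXZ, Matrix.mul_apply, Fin.sum_univ_three,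
      -mul_eq_mul_left_iff, -mul_eq_mul_right_iff]
    ring
  have hGe00 : G 0 0 = A 2 0*A 2 0*d + A 1 0*A 1 0*c + A 0 0*A 0 0*c := by
    rw [hG]
    simp [transform, levyIIIa_f, levyIIIa_g, mXZ, Matrix.mul_apply, Fin.sum_univ_three,
      -mul_eq_mul_left_iff, -mul_eq_mul_right_iff]
    ring
  have hGe01 : G 0 1 = A 2 0*A 2 1*d + A 1 0*A 1 1*c + A 0 0*A 0 1*c := by
    rw [hG]
    simp [transform, levyIIIa_f, levyIIIa_g, mXZ, Matrix.mul_apply, Fin.sum_univ_three,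
      -mul_eq_mul_left_iff, -mul_eq_mul_right_iff]
    ring
  have hGe02 : G 0 2 = A 2 0*A 2 2*d + A 1 0*A 1 2*c + A 0 0*A 0 2*c := by
    rw [hG]
    simp [transform, levyIIIa_f, levyIIIa_g, mXZ, Matrix.mul_apply, Fin.sum_univ_three,
      -mul_eq_mul_left_iff, -mul_eq_mul_right_iff]
    ring
  have hGe10 : G 1 0 = A 2 0*A 2 1*d + A 1 0*A 1 1*c + A 0 0*A 0 1*c := by
    rw [hG]
    simp [transform, levyIIIa_f, levyIIIa_g, mXZ, Matrix.mul_apply, Fin.sum_univ_three,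
      -mul_eq_mul_left_iff, -mul_eq_mul_right_iff]
    ring
  have hGe11 : G 1 1 = A 2 1*A 2 1*d + A 1 1*A 1 1*c + A 0 1*A 0 1*c := by
    rw [hG]
    simp [transform, levyIIIa_f, levyIIIa_g, mXZ, Matrix.mul_apply, Fin.sum_univ_three,
      -mul_eq_mul_left_iff, -mul_eq_mul_right_iff]
    ring
  have hGe12 : G 1 2 = A 2 1*A 2 2*d + A 1 1*A 1 2*c + A 0 1*A 0 2*c := by
    rw [hG]
    simp [transform, levyIIIa_f, levyIIIa_g, mXZ, Matrix.mul_apply, Fin.sum_univ_three,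
      -mul_eq_mul_left_iff, -mul_eq_mul_right_iff]
    ring
  have hGe20 : G 2 0 = A 2 0*A 2 2*d + A 1 0*A 1 2*c + A 0 0*A 0 2*c := by
    rw [hG]
    simp [transform, levyIIIa_f, levyIIIa_g, mXZ, Matrix.mul_apply, Fin.sum_univ_three,
      -mul_eq_mul_left_iff, -mul_eq_mul_right_iff]
    ring
  have hGe21 : G 2 1 = A 2 1*A 2 2*d + A 1 1*A 1 2*c + A 0 1*A 0 2*c := by
    rw [hG]
    simp [transform, levyIIIa_f, levyIIIa_g, mXZ, Matrix.mul_apply, Fin.sum_univ_three,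
      -mul_eq_mul_left_iff, -mul_eq_mul_right_iff]
    ring
  have hGe22 : G 2 2 = A 2 2*A 2 2*d + A 1 2*A 1 2*c + A 0 2*A 0 2*c := by
    rw [hG]
    simp [transform, levyIIIa_f, levyIIIa_g, mXZ, Matrix.mul_apply, Fin.sum_univ_three,
      -mul_eq_mul_left_iff, -mul_eq_mul_right_iff]
    ring
  have hAdet : A.det = Dx := by
    rw [Matrix.det_fin_three, hDx]
    ring
  have hDxne : Dx ≠ 0 := fun h => hdA (by rw [hAdet, h])
  have hFdet : F.det = (a^2*b)*Dx^2 := by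
    rw [Matrix.det_fin_three]
    simp only [hFe00, hFe01, hFe02, hFe10, hFe11, hFe12, hFe20, hFe21, hFe22]
    rw [hDx]
    ring
  have ha : a ≠ 0 := by
    intro h
    apply hdF
    rw [hFdet, h]
    ring
  have hb : b ≠ 0 := by
    intro h
    apply hdF
    rw [hFdet, h]
    ring
  have hc3vne : ((a^2*b)*Dx^2 : ℝ) ≠ 0 := mul_ne_zero (mul_ne_zero (pow_ne_zero 2 ha) hb) (pow_ne_zero 2 hDxne)
  have hc3 : ph F G 3 = (a^2*b)*Dx^2 := by
    rw [ph3_eq]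
    simp only [hFe00, hFe01, hFe02, hFe10, hFe11, hFe12, hFe20, hFe21, hFe22, hGe00, hGe01, hGe02, hGe10, hGe11, hGe12, hGe20, hGe21, hGe22]
    rw [hDx]
    ring
  have hc2 : ph F G 2 = (a^2*d+2*(a*b*c))*Dx^2 := by
    rw [ph2_eq]
    simp only [hFe00, hFe01, hFe02, hFe10, hFe11, hFe12, hFe20, hFe21, hFe22, hGe00, hGe01, hGe02, hGe10, hGe11, hGe12, hGe20, hGe21, hGe22]
    rw [hDx]
    ring
  have hc1 : ph F G 1 = (2*(a*c*d)+b*c^2)*Dx^2 := by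
    rw [ph1_eq]
    simp only [hFe00, hFe01, hFe02, hFe10, hFe11, hFe12, hFe20, hFe21, hFe22, hGe00, hGe01, hGe02, hGe10, hGe11, hGe12, hGe20, hGe21, hGe22]
    rw [hDx]
    ring
  have hs2 : (psiP F G).coeff 2 = (a*b)*al + a^2*be := by
    rw [ps2_eq]
    simp only [hFe00, hFe01, hFe02, hFe10, hFe11, hFe12, hFe20, hFe21, hFe22, hGe00, hGe01, hGe02, hGe10, hGe11, hGe12, hGe20, hGe21, hGe22]
    rw [hal, hbe, hB0, hB1, hB2]
    ring
  have hs1 : (psiP F G).coeff 1 = (a*d+b*c)*al + 2*(a*c)*be := by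
    rw [ps1_eq]
    simp only [hFe00, hFe01, hFe02, hFe10, hFe11, hFe12, hFe20, hFe21, hFe22, hGe00, hGe01, hGe02, hGe10, hGe11, hGe12, hGe20, hGe21, hGe22]
    rw [hal, hbe, hB0, hB1, hB2]
    ring
  have hs0 : (psiP F G).coeff 0 = (c*d)*al + c^2*be := by
    rw [ps0_eq]
    simp only [hFe00, hFe01, hFe02, hFe10, hFe11, hFe12, hFe20, hFe21, hFe22, hGe00, hGe01, hGe02, hGe10, hGe11, hGe12, hGe20, hGe21, hGe22]
    rw [hal, hbe, hB0, hB1, hB2]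
    ring
  have hc3ne : ph F G 3 ≠ 0 := by
    rw [hc3]
    exact hc3vne
  have hp2 := pc_formula F G hc3ne
  rw [hc3, hc2, hc1, hs2, hs1, hs0] at hp2
  have hkey : pc F G 2 = Dx^4*(a*d-b*c)^2*a^4*be := by
    rw [hp2, div_eq_iff (pow_ne_zero 2 hc3vne)]
    ring
  have hcombo : Dx = A 2 0 * B0 + A 2 1 * B1 + A 2 2 * B2 := by
    rw [hDx, hB0, hB1, hB2]
    ring
  have hbpos : 0 < be := by
    rw [hbe]
    exact sumsq_pos hDxne hcombo
  have hT : 0 < Dx^4*(a*d-b*c)^2*a^4*be := by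
    have h1 : 0 < Dx^4 := lt_of_le_of_ne (by positivity) (Ne.symm (pow_ne_zero 4 hDxne))
    have h2 : 0 < (a*d-b*c)^2 := lt_of_le_of_ne (by positivity) (Ne.symm (pow_ne_zero 2 hpl))
    have h3 : 0 < a^4 := lt_of_le_of_ne (by positivity) (Ne.symm (pow_ne_zero 4 ha))
    exact mul_pos (mul_pos (mul_pos h1 h2) h3) hbpos
  rw [hkey]
  first
  | exact mul_neg_of_neg_of_pos (by norm_num) hT
  | exact hT

/-- **Proposition.** Discrimination between orbits III and IIIa. -/
theorem discrimination_III_vs_IIIa (F G : RMat)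
    (hF : F.IsSymm) (hG : G.IsSymm) (hdF : F.det ≠ 0) (hdG : G.det ≠ 0) :
    (PencilEquivTo F G levyIII_f levyIII_g → pc F G 2 < 0) ∧
    (PencilEquivTo F G levyIIIa_f levyIIIa_g → 0 < pc F G 2) := by
  constructor
  · rintro ⟨A, hsp⟩
    have hdA : ((A : RMat)).det ≠ 0 :=
      ((Matrix.isUnit_iff_isUnit_det _).mp A.isUnit).ne_zero
    have hFX : F ∈ Submodule.span ℝ
        ({transform (↑A) levyIII_f, transform (↑A) levyIII_g} : Set RMat) := by
      rw [hsp]; exact Submodule.subset_span (Set.mem_insert _ _)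
    have hGX : G ∈ Submodule.span ℝ
        ({transform (↑A) levyIII_f, transform (↑A) levyIII_g} : Set RMat) := by
      rw [hsp]; exact Submodule.subset_span (Set.mem_insert_of_mem _ rfl)
    have hXF : transform (↑A) levyIII_f ∈ Submodule.span ℝ ({F, G} : Set RMat) := by
      rw [← hsp]; exact Submodule.subset_span (Set.mem_insert _ _)
    have hYF : transform (↑A) levyIII_g ∈ Submodule.span ℝ ({F, G} : Set RMat) := by
      rw [← hsp]; exact Submodule.subset_span (Set.mem_insert_of_mem _ rfl)
    obtain ⟨a, b, hab⟩ := Submodule.mem_span_pair.mp hFX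
    obtain ⟨c, d, hcd⟩ := Submodule.mem_span_pair.mp hGX
    obtain ⟨p, q, hpq⟩ := Submodule.mem_span_pair.mp hXF
    obtain ⟨r, s, hrs⟩ := Submodule.mem_span_pair.mp hYF
    have hind : ∀ u v : ℝ,
        u • transform (↑A) levyIII_f + v • transform (↑A) levyIII_g = 0 →
        u = 0 ∧ v = 0 := by
      intro u v huv
      have hM : ((A : RMat))ᵀ * (u • levyIII_f + v • levyIII_g) * (A : RMat) = 0 := by
        calc ((A : RMat))ᵀ * (u • levyIII_f + v • levyIII_g) * (A : RMat)
            = u • transform (↑A) levyIII_f + v • transform (↑A) levyIII_g := by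
              simp [transform, Matrix.mul_add, Matrix.add_mul, Matrix.mul_smul, Matrix.smul_mul]
          _ = 0 := huv
      have h2 : u • levyIII_f + v • levyIII_g = 0 := by
        have hone : ((A : RMat)) * ((A⁻¹ : GL (Fin 3) ℝ) : RMat) = 1 := by
          first
          | exact Units.mul_inv A
          | rw [← Units.val_mul, mul_inv_cancel, Units.val_one]
        calc u • levyIII_f + v • levyIII_g
            = (((A : RMat)) * ((A⁻¹ : GL (Fin 3) ℝ) : RMat))ᵀ *
                (u • levyIII_f + v • levyIII_g) *
                (((A : RMat)) * ((A⁻¹ : GL (Fin 3) ℝ) : RMat)) := by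
              rw [hone]; simp
          _ = ((A⁻¹ : GL (Fin 3) ℝ) : RMat)ᵀ *
                (((A : RMat))ᵀ * (u • levyIII_f + v • levyIII_g) * (A : RMat)) *
                ((A⁻¹ : GL (Fin 3) ℝ) : RMat) := by
              rw [Matrix.transpose_mul]
              simp only [Matrix.mul_assoc]
          _ = 0 := by rw [hM]; simp
      constructor
      · have hu := congrFun (congrFun h2 0) 2
        simp [levyIII_f, levyIII_g, mXZ] at hu
        linarith
      · have hv := congrFun (congrFun h2 1) 1
        simp [levyIII_f, levyIII_g, mXZ] at hv
        linarith
    rw [← hab, ← hcd] at hpq hrs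
    have e0 : (p*a+q*c-1) • transform (↑A) levyIII_f +
        (p*b+q*d) • transform (↑A) levyIII_g = 0 := by
      linear_combination (norm := module) hpq
    obtain ⟨e1, e2⟩ := hind _ _ e0
    have e0' : (r*a+s*c) • transform (↑A) levyIII_f +
        (r*b+s*d-1) • transform (↑A) levyIII_g = 0 := by
      linear_combination (norm := module) hrs
    obtain ⟨e3, e4⟩ := hind _ _ e0'
    have f1 : p*a+q*c = 1 := by linarith
    have f4 : r*b+s*d = 1 := by linarith
    have hprod : (p*s-q*r)*(a*d-b*c) = 1 := by
      have hh : (p*s-q*r)*(a*d-b*c) = (p*a+q*c)*(r*b+s*d) - (p*b+q*d)*(r*a+s*c) := by ring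
      rw [f1, f4, e2, e3] at hh
      simpa using hh
    have hpl : a*d - b*c ≠ 0 := by
      intro h0
      rw [h0, mul_zero] at hprod
      norm_num at hprod
    exact auxIII (↑A) hdA a b c d F G hab.symm hcd.symm hpl hdF
  · rintro ⟨A, hsp⟩
    have hdA : ((A : RMat)).det ≠ 0 :=
      ((Matrix.isUnit_iff_isUnit_det _).mp A.isUnit).ne_zero
    have hFX : F ∈ Submodule.span ℝ
        ({transform (↑A) levyIIIa_f, transform (↑A) levyIIIa_g} : Set RMat) := by
      rw [hsp]; exact Submodule.subset_span (Set.mem_insert _ _)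
    have hGX : G ∈ Submodule.span ℝ
        ({transform (↑A) levyIIIa_f, transform (↑A) levyIIIa_g} : Set RMat) := by
      rw [hsp]; exact Submodule.subset_span (Set.mem_insert_of_mem _ rfl)
    have hXF : transform (↑A) levyIIIa_f ∈ Submodule.span ℝ ({F, G} : Set RMat) := by
      rw [← hsp]; exact Submodule.subset_span (Set.mem_insert _ _)
    have hYF : transform (↑A) levyIIIa_g ∈ Submodule.span ℝ ({F, G} : Set RMat) := by
      rw [← hsp]; exact Submodule.subset_span (Set.mem_insert_of_mem _ rfl)
    obtain ⟨a, b, hab⟩ := Submodule.mem_span_pair.mp hFX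
    obtain ⟨c, d, hcd⟩ := Submodule.mem_span_pair.mp hGX
    obtain ⟨p, q, hpq⟩ := Submodule.mem_span_pair.mp hXF
    obtain ⟨r, s, hrs⟩ := Submodule.mem_span_pair.mp hYF
    have hind : ∀ u v : ℝ,
        u • transform (↑A) levyIIIa_f + v • transform (↑A) levyIIIa_g = 0 →
        u = 0 ∧ v = 0 := by
      intro u v huv
      have hM : ((A : RMat))ᵀ * (u • levyIIIa_f + v • levyIIIa_g) * (A : RMat) = 0 := by
        calc ((A : RMat))ᵀ * (u • levyIIIa_f + v • levyIIIa_g) * (A : RMat)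
            = u • transform (↑A) levyIIIa_f + v • transform (↑A) levyIIIa_g := by
              simp [transform, Matrix.mul_add, Matrix.add_mul, Matrix.mul_smul, Matrix.smul_mul]
          _ = 0 := huv
      have h2 : u • levyIIIa_f + v • levyIIIa_g = 0 := by
        have hone : ((A : RMat)) * ((A⁻¹ : GL (Fin 3) ℝ) : RMat) = 1 := by
          first
          | exact Units.mul_inv A
          | rw [← Units.val_mul, mul_inv_cancel, Units.val_one]
        calc u • levyIIIa_f + v • levyIIIa_g
            = (((A : RMat)) * ((A⁻¹ : GL (Fin 3) ℝ) : RMat))ᵀ *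
                (u • levyIIIa_f + v • levyIIIa_g) *
                (((A : RMat)) * ((A⁻¹ : GL (Fin 3) ℝ) : RMat)) := by
              rw [hone]; simp
          _ = ((A⁻¹ : GL (Fin 3) ℝ) : RMat)ᵀ *
                (((A : RMat))ᵀ * (u • levyIIIa_f + v • levyIIIa_g) * (A : RMat)) *
                ((A⁻¹ : GL (Fin 3) ℝ) : RMat) := by
              rw [Matrix.transpose_mul]
              simp only [Matrix.mul_assoc]
          _ = 0 := by rw [hM]; simp
      constructor
      · have hu := congrFun (congrFun h2 0) 0
        simp [levyIIIa_f, levyIIIa_g, mXZ, Matrix.zero_apply, Matrix.vecHead, Matrix.vecTail] at hu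
        linarith
      · have hv := congrFun (congrFun h2 2) 2
        simp [levyIIIa_f, levyIIIa_g, mXZ, Matrix.zero_apply, Matrix.vecHead, Matrix.vecTail] at hv
        linarith
    rw [← hab, ← hcd] at hpq hrs
    have e0 : (p*a+q*c-1) • transform (↑A) levyIIIa_f +
        (p*b+q*d) • transform (↑A) levyIIIa_g = 0 := by
      linear_combination (norm := module) hpq
    obtain ⟨e1, e2⟩ := hind _ _ e0
    have e0' : (r*a+s*c) • transform (↑A) levyIIIa_f +
        (r*b+s*d-1) • transform (↑A) levyIIIa_g = 0 := by
      linear_combination (norm := module) hrs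
    obtain ⟨e3, e4⟩ := hind _ _ e0'
    have f1 : p*a+q*c = 1 := by linarith
    have f4 : r*b+s*d = 1 := by linarith
    have hprod : (p*s-q*r)*(a*d-b*c) = 1 := by
      have hh : (p*s-q*r)*(a*d-b*c) = (p*a+q*c)*(r*b+s*d) - (p*b+q*d)*(r*a+s*c) := by ring
      rw [f1, f4, e2, e3] at hh
      simpa using hh
    have hpl : a*d - b*c ≠ 0 := by
      intro h0
      rw [h0, mul_zero] at hprod
      norm_num at hprod
    exact auxA (↑A) hdA a b c d F G hab.symm hcd.symm hpl hdF
end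
end
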